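/- Let (X_n) be a Markov chain with kernel P, stationary distribution π, satisfying the small set condition P(x,·) ≥ β 1(x∈J) ν(·). In the split-chain construction with first regeneration time T, for any nonnegative measurable function g: E_ν[(∑_{i=0}^{T-1} g(X_i))²] = E_ν[T] · ( E_π[g(X_0)²] + 2 ∑_{n=1}^∞ E_π[g(X_0) g(X_n) 1(T > n)] ). -/

import Mathlib

open MeasureTheory ProbabilityTheory ENNReal

noncomputable section

/-- Bernoulli measure on `Bool` with success probability `p`. -/
def bern (p : ℝ≥0∞) : Measure Bool :=
  p • Measure.dirac true + (1 - p) • Measure.dirac false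

variable {𝓧 : Type*} [MeasurableSpace 𝓧]

/-- Probability of ringing the bell (regenerating) from state `x`. -/
def regenProb (β : ℝ≥0∞) (J : Set 𝓧) (x : 𝓧) : ℝ≥0∞ := J.indicator (fun _ => β) x

/-- The normalized residKernel kernel `Q(x,·) = (P(x,·) - β 1_J(x) ν)/(1 - β 1_J(x))`. -/
def residKernel (P : Kernel 𝓧 𝓧) (β : ℝ≥0∞) (J : Set 𝓧) (ν : Measure 𝓧) (x : 𝓧) :
    Measure 𝓧 :=
  (1 - regenProb β J x)⁻¹ • (P x - regenProb β J x • ν)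

/-- One step of the split chain on `𝓧 × Bool`: given `(x, b)`, the next state is drawn
from `ν` if `b = true` (regeneration) and from `Q(x,·)` otherwise; then the new bell
variable is Bernoulli with probability `β 1_J` at the new state. -/
def splitStep (P : Kernel 𝓧 𝓧) (β : ℝ≥0∞) (J : Set 𝓧) (ν : Measure 𝓧)
    (s : 𝓧 × Bool) : Measure (𝓧 × Bool) :=
  (if s.2 then ν else residKernel P β J ν s.1).bind
    (fun y => (Measure.dirac y).prod (bern (regenProb β J y)))

/-- The initial distribution of the split chain when `X₀ ∼ ξ`. -/
def splitInit (β : ℝ≥0∞) (J : Set 𝓧) (ξ : Measure 𝓧) : Measure (𝓧 × Bool) :=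
  ξ.bind (fun x => (Measure.dirac x).prod (bern (regenProb β J x)))

/-- A split chain: a Markov kernel `P` with stationarity data, satisfying the one-step
small set (minorization) condition, together with the trajectory measures of the
associated split chain on `𝓧 × Bool` (Nummelin / Athreya–Ney construction). -/
structure SplitChain (𝓧 : Type*) [MeasurableSpace 𝓧] where
  P : Kernel 𝓧 𝓧
  β : ℝ≥0∞
  J : Set 𝓧
  ν : Measure 𝓧
  K : Kernel (𝓧 × Bool) (𝓧 × Bool)
  traj : Measure (𝓧 × Bool) → Measure (ℕ → 𝓧 × Bool)
  isMarkovP : IsMarkovKernel P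
  probν : IsProbabilityMeasure ν
  measJ : MeasurableSet J
  βpos : 0 < β
  βle : β ≤ 1
  small : ∀ x ∈ J, β • ν ≤ P x
  hK : ∀ s, K s = splitStep P β J ν s
  probTraj : ∀ μ, IsProbabilityMeasure μ → IsProbabilityMeasure (traj μ)
  h0 : ∀ μ, Measure.map (fun ω => ω 0) (traj μ) = μ
  hMarkov : ∀ μ (n : ℕ),
    Measure.map (fun ω => ((fun i : Fin (n + 1) => ω (i : ℕ)), ω (n + 1))) (traj μ)
      = (Measure.map (fun ω => fun i : Fin (n + 1) => ω (i : ℕ)) (traj μ)) ⊗ₘ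
        (K.comap (fun v : Fin (n + 1) → 𝓧 × Bool => v (Fin.last n))
          (measurable_pi_apply _))

namespace SplitChain

variable (sc : SplitChain 𝓧)

/-- The law of the split chain trajectory with initial distribution `X₀ ∼ ξ`. -/
def law (ξ : Measure 𝓧) : Measure (ℕ → 𝓧 × Bool) := sc.traj (splitInit sc.β sc.J ξ)

/-- The `𝓧`-valued coordinate process. -/
def X (n : ℕ) (ω : ℕ → 𝓧 × Bool) : 𝓧 := (ω n).1

/-- The first regeneration time `T := min {n ≥ 1 : Γ_{n-1} = 1}` (with the convention
`sInf ∅ = 0`). -/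
def T (ω : ℕ → 𝓧 × Bool) : ℕ := sInf {n | 1 ≤ n ∧ (ω (n - 1)).2 = true}

/-- The successive regeneration times `T_k`, with `T_0 := 0`. -/
def Tk (sc : SplitChain 𝓧) : ℕ → (ℕ → 𝓧 × Bool) → ℕ
  | 0, _ => 0
  | (k + 1), ω => sInf {n | Tk sc k ω < n ∧ (ω (n - 1)).2 = true}

/-- `R(n) := min {r ≥ 1 : T_r > n}`. -/
def R (n : ℕ) (ω : ℕ → 𝓧 × Bool) : ℕ := sInf {r | 1 ≤ r ∧ n < sc.Tk r ω}

end SplitChain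

end

/-!
Write `ℙ_ξ` for `sc.law ξ` and `θ_j` for the shift. The heart of the proof is Kac's formula
`E_ν[T] • ℙ_π = ∑_j (θ_j)_* (ℙ_ν restricted to {j < T})`: the stationary law is the normalized
occupation measure of the first regeneration cycle. Since `traj` is only specified through its
one-step Markov property, this is first proved for functions of finitely many coordinates.
At a bell the future is a fresh copy of the chain started from `ν`, so splitting on the bell at
time `0` and using shift invariance of `ℙ_π` gives
`E_π f = ℙ_π(Γ₀) ∑_{j<n} E_ν[1(no bell before j) f ∘ θ_j] + E_π[1(no bell before n) f ∘ θ_n]`,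
and for bounded `f` Harris recurrence kills the last term as `n → ∞`. Cylinder sets determine
finite measures, and comparing total masses gives `E_ν[T] ℙ_π(Γ₀) = 1`.

The theorem is Kac's formula for `F = g(X₀)² + 2 ∑ₙ g(X₀) g(Xₙ₊₁) 1(n + 1 < T)`: since
`T ∘ θ_j = T - j` for `j < T`, the cycle sum `∑_{j<T} F ∘ θ_j` equals `(∑_{i<T} g(Xᵢ))²`.
-/

open MeasureTheory ProbabilityTheory ENNReal Set Filter Topology

noncomputable section

lemma lintegral_bern (p : ℝ≥0∞) (h : Bool → ℝ≥0∞) :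
    ∫⁻ b, h b ∂bern p = p * h true + (1 - p) * h false := by
  simp [bern, lintegral_add_measure, lintegral_smul_measure, lintegral_dirac]

namespace SplitChain

section Path

variable {α : Type*}

def shift (j : ℕ) (ω : ℕ → α) : ℕ → α := fun i => ω (i + j)

def snoc (n : ℕ) (ω : ℕ → α) (s : α) : ℕ → α := fun i => if i ≤ n then ω i else s

@[simp] lemma shift_apply (j i : ℕ) (ω : ℕ → α) : shift j ω i = ω (i + j) := rfl

@[simp] lemma shift_zero (ω : ℕ → α) : shift 0 ω = ω := rfl

lemma shift_shift (i j : ℕ) (ω : ℕ → α) : shift i (shift j ω) = shift (i + j) ω :=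
  funext fun k => by simp [Nat.add_assoc]

lemma shift_snoc (j n : ℕ) (ω : ℕ → α) (s : α) :
    shift j (snoc (n + j) ω s) = snoc n (shift j ω) s :=
  funext fun i => by simp [snoc]

lemma _root_.DependsOn.comp_shift {β : Type*} {f : (ℕ → α) → β} {n : ℕ}
    (hf : DependsOn f (Iic n)) (j : ℕ) : DependsOn (fun ω => f (shift j ω)) (Iic (n + j)) :=
  fun _ _ h => hf fun _ hi => h _ (by simp_all)

lemma _root_.DependsOn.snoc_eq {β : Type*} {f : (ℕ → α) → β} {m n : ℕ} (hf : DependsOn f (Iic m))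
    (hmn : m ≤ n) (ω : ℕ → α) (s : α) : f (snoc n ω s) = f ω :=
  hf fun _ hi => if_pos ((mem_Iic.1 hi).trans hmn)

lemma _root_.DependsOn.mul {β : Type*} [Mul β] {f g : (ℕ → α) → β} {s : Set ℕ}
    (hf : DependsOn f s) (hg : DependsOn g s) : DependsOn (fun ω => f ω * g ω) s :=
  fun _ _ h => by simp only [hf h, hg h]

variable [MeasurableSpace α]

@[fun_prop]
lemma measurable_shift (j : ℕ) : Measurable (shift (α := α) j) :=
  measurable_pi_lambda _ fun _ => measurable_pi_apply _

lemma measurable_snoc (n : ℕ) : Measurable fun p : (ℕ → α) × α => snoc n p.1 p.2 := by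
  refine measurable_pi_lambda _ fun i => ?_
  by_cases h : i ≤ n
  · simp only [snoc, h, if_true]; fun_prop
  · simp only [snoc, h, if_false]; fun_prop

end Path

section Bell

variable {𝓧 : Type*}

def bellAt (k : ℕ) : Set (ℕ → 𝓧 × Bool) := {ω | (ω k).2 = true}

def noBellBefore (n : ℕ) : Set (ℕ → 𝓧 × Bool) := {ω | ∀ i < n, (ω i).2 = false}

lemma noBellBefore_zero : noBellBefore (𝓧 := 𝓧) 0 = univ := by simp [noBellBefore]

lemma indicator_noBellBefore_shift_one (n : ℕ) (ω : ℕ → 𝓧 × Bool) :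
    (noBellBefore n).indicator (1 : (ℕ → 𝓧 × Bool) → ℝ≥0∞) (shift 1 ω)
      = (noBellBefore (n + 1)).indicator 1 ω
        + (bellAt 0).indicator 1 ω * (noBellBefore n).indicator 1 (shift 1 ω) := by
  have hsucc : ω ∈ noBellBefore (n + 1) ↔ (ω 0).2 = false ∧ shift 1 ω ∈ noBellBefore n :=
    Nat.forall_lt_succ_left
  by_cases hq : shift 1 ω ∈ noBellBefore n <;> cases h : (ω 0).2 <;>
    simp [indicator_of_mem, indicator_of_notMem, hsucc, hq, h, bellAt]

lemma dependsOn_indicator_bellAt (k : ℕ) :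
    DependsOn ((bellAt k).indicator (1 : (ℕ → 𝓧 × Bool) → ℝ≥0∞)) (Iic k) := fun ω ω' h => by
  simp only [indicator_apply, bellAt, mem_ofPred_eq, Pi.one_apply, h k (mem_Iic.2 le_rfl)]

lemma dependsOn_indicator_noBellBefore (n : ℕ) :
    DependsOn ((noBellBefore n).indicator (1 : (ℕ → 𝓧 × Bool) → ℝ≥0∞)) (Iic n) := fun ω ω' h => by
  have : ω ∈ noBellBefore n ↔ ω' ∈ noBellBefore n :=
    forall₂_congr fun i hi => by rw [h i (mem_Iic.2 hi.le)]
  by_cases hω : ω ∈ noBellBefore n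
  · rw [indicator_of_mem hω, indicator_of_mem (this.1 hω)]
    rfl
  · rw [indicator_of_notMem hω, indicator_of_notMem (mt this.2 hω)]

lemma T_spec {ω : ℕ → 𝓧 × Bool} {n : ℕ} (hn : (ω n).2 = true) :
    1 ≤ T ω ∧ (ω (T ω - 1)).2 = true :=
  Nat.sInf_mem (s := {n | 1 ≤ n ∧ (ω (n - 1)).2 = true}) ⟨n + 1, by simp, by simpa using hn⟩

lemma T_le {ω : ℕ → 𝓧 × Bool} {n : ℕ} (h1 : 1 ≤ n) (hn : (ω (n - 1)).2 = true) : T ω ≤ n :=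
  Nat.sInf_le ⟨h1, hn⟩

lemma lt_T_iff {ω : ℕ → 𝓧 × Bool} {j : ℕ} :
    j < T ω ↔ (∃ n, (ω n).2 = true) ∧ ω ∈ noBellBefore j := by
  constructor
  · intro hj
    have hbell : ∃ n, (ω n).2 = true := by
      by_contra! h
      have : {n | 1 ≤ n ∧ (ω (n - 1)).2 = true} = ∅ :=
        eq_empty_of_forall_notMem fun n hn => h _ hn.2
      simp [T, this] at hj
    refine ⟨hbell, fun i hi => ?_⟩
    by_contra hi'
    have := T_le (ω := ω) (n := i + 1) (by omega) (by simpa using hi')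
    omega
  · rintro ⟨⟨n, hn⟩, hquiet⟩
    obtain ⟨h1, hT⟩ := T_spec hn
    by_contra hj
    simp [hquiet (T ω - 1) (by omega)] at hT

lemma T_shift {ω : ℕ → 𝓧 × Bool} {j : ℕ} (hj : j < T ω) : T (shift j ω) = T ω - j := by
  obtain ⟨⟨n, hn⟩, hquiet⟩ := lt_T_iff.1 hj
  obtain ⟨h1, hT⟩ := T_spec hn
  refine le_antisymm (T_le (n := T ω - j) (by omega)
    (by simpa [show T ω - j - 1 + j = T ω - 1 by omega])) ?_
  obtain ⟨h1', hT'⟩ := T_spec (ω := shift j ω) (n := T ω - 1 - j)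
    (by simpa [show T ω - 1 - j + j = T ω - 1 by omega])
  have := T_le (ω := ω) (n := T (shift j ω) + j) (by omega)
    (by simpa [show T (shift j ω) - 1 + j = T (shift j ω) + j - 1 by omega] using hT')
  omega

lemma sum_range_T_eq_tsum (F : (ℕ → 𝓧 × Bool) → ℝ≥0∞) (ω : ℕ → 𝓧 × Bool) :
    ∑ j ∈ Finset.range (T ω), F (shift j ω)
      = ∑' j, {ω' | j < T ω'}.indicator (fun ω' => F (shift j ω')) ω := by
  rw [tsum_eq_sum (s := Finset.range (T ω))
    (f := fun j => {ω' | j < T ω'}.indicator (fun ω' => F (shift j ω')) ω) fun j hj =>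
    indicator_of_notMem (s := {ω' | j < T ω'}) (fun h => hj (Finset.mem_range.2 h)) _]
  exact Finset.sum_congr rfl fun j hj =>
    (indicator_of_mem (s := {ω' | j < T ω'}) (Finset.mem_range.1 hj)
      (fun ω' => F (shift j ω'))).symm

variable [MeasurableSpace 𝓧]

lemma measurableSet_bellAt (k : ℕ) : MeasurableSet (bellAt (𝓧 := 𝓧) k) :=
  (measurable_snd.comp (measurable_pi_apply k)) (measurableSet_singleton true)

lemma measurableSet_noBellBefore (n : ℕ) : MeasurableSet (noBellBefore (𝓧 := 𝓧) n) := by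
  simp only [noBellBefore, ofPred_forall]
  exact .iInter fun i => .iInter fun _ =>
    (measurable_snd.comp (measurable_pi_apply i)) (measurableSet_singleton false)

lemma measurableSet_lt_T (j : ℕ) : MeasurableSet {ω : ℕ → 𝓧 × Bool | j < T ω} := by
  simp_rw [lt_T_iff, ofPred_and, ofPred_exists]
  exact (MeasurableSet.iUnion measurableSet_bellAt).inter (measurableSet_noBellBefore j)

variable {μ : Measure (ℕ → 𝓧 × Bool)}

lemma tendsto_measure_noBellBefore [IsFiniteMeasure μ]
    (h : μ {ω | ∀ n, (ω n).2 = false} = 0) :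
    Tendsto (fun n => μ (noBellBefore n)) atTop (𝓝 0) := by
  have hinter : ⋂ n, noBellBefore n = {ω : ℕ → 𝓧 × Bool | ∀ n, (ω n).2 = false} := by
    ext ω
    simp only [noBellBefore, mem_iInter, mem_ofPred_eq]
    exact ⟨fun h i => h (i + 1) i i.lt_succ_self, fun h _ i _ => h i⟩
  rw [← h, ← hinter]
  exact tendsto_measure_iInter_atTop (fun n => (measurableSet_noBellBefore n).nullMeasurableSet)
    (fun _ _ hmn _ hω i hi => hω i (by omega)) ⟨0, measure_ne_top _ _⟩

lemma lintegral_sum_range_T (h : μ {ω | ∀ n, (ω n).2 = false} = 0)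
    {F : (ℕ → 𝓧 × Bool) → ℝ≥0∞} (hF : Measurable F) :
    ∫⁻ ω, ∑ j ∈ Finset.range (T ω), F (shift j ω) ∂μ
      = ∑' j, ∫⁻ ω, (noBellBefore j).indicator 1 ω * F (shift j ω) ∂μ := by
  rw [← lintegral_tsum (f := fun j ω => (noBellBefore j).indicator 1 ω * F (shift j ω))
    fun j => ((measurable_one.indicator (measurableSet_noBellBefore j)).mul
    (hF.comp (measurable_shift j))).aemeasurable]
  have hbell : ∀ᵐ ω ∂μ, ∃ n, (ω n).2 = true := by
    rw [ae_iff]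
    simpa using h
  refine lintegral_congr_ae ?_
  filter_upwards [hbell] with ω hω
  rw [sum_range_T_eq_tsum]
  refine tsum_congr fun j => ?_
  by_cases hj : ω ∈ noBellBefore j <;> simp [lt_T_iff, hω, hj]

end Bell

variable {𝓧 : Type*} [MeasurableSpace 𝓧] (sc : SplitChain 𝓧)

def bellProb (x : 𝓧) : ℝ≥0∞ := regenProb sc.β sc.J x

/-- The law of `(Xₙ, Γₙ)` given `Xₙ = y`: the bell `Γₙ` rings with probability `β 1_J(y)`. -/
def bellStep (y : 𝓧) : Measure (𝓧 × Bool) := (Measure.dirac y).prod (bern (sc.bellProb y))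

lemma bellProb_le_one (x : 𝓧) : sc.bellProb x ≤ 1 := by
  by_cases hx : x ∈ sc.J <;> simp [bellProb, regenProb, hx, sc.βle]

lemma measurable_bellProb : Measurable sc.bellProb := measurable_const.indicator sc.measJ

lemma lintegral_bellStep (y : 𝓧) {h : 𝓧 × Bool → ℝ≥0∞} (hh : Measurable h) :
    ∫⁻ s, h s ∂sc.bellStep y
      = sc.bellProb y * h (y, true) + (1 - sc.bellProb y) * h (y, false) := by
  rw [bellStep, Measure.dirac_prod, lintegral_map hh measurable_prodMk_left, lintegral_bern]

instance (y : 𝓧) : IsProbabilityMeasure (sc.bellStep y) :=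
  ⟨by simpa [add_tsub_cancel_of_le (sc.bellProb_le_one y)] using
    sc.lintegral_bellStep y (h := 1) measurable_const⟩

lemma measurable_bellStep : Measurable sc.bellStep := by
  refine Measure.measurable_of_measurable_coe _ fun A hA => ?_
  have hind : Measurable (A.indicator (1 : 𝓧 × Bool → ℝ≥0∞)) := measurable_one.indicator hA
  simp_rw [← lintegral_indicator_one hA, sc.lintegral_bellStep _ hind]
  exact (sc.measurable_bellProb.mul (hind.comp measurable_prodMk_right)).add
    ((measurable_const.sub sc.measurable_bellProb).mul (hind.comp measurable_prodMk_right))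

lemma splitInit_eq_bind (ξ : Measure 𝓧) : splitInit sc.β sc.J ξ = ξ.bind sc.bellStep := rfl

instance (ξ : Measure 𝓧) [IsProbabilityMeasure ξ] :
    IsProbabilityMeasure (splitInit sc.β sc.J ξ) :=
  isProbabilityMeasure_bind sc.measurable_bellStep.aemeasurable
    (ae_of_all _ fun y => inferInstanceAs (IsProbabilityMeasure (sc.bellStep y)))

instance : IsProbabilityMeasure sc.ν := sc.probν

instance : IsMarkovKernel sc.P := sc.isMarkovP

instance (ξ : Measure 𝓧) [IsProbabilityMeasure ξ] : IsProbabilityMeasure (sc.law ξ) :=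
  sc.probTraj _ inferInstance

lemma K_apply (s : 𝓧 × Bool) :
    sc.K s = (if s.2 then sc.ν else residKernel sc.P sc.β sc.J sc.ν s.1).bind sc.bellStep :=
  sc.hK s

lemma K_of_bell {s : 𝓧 × Bool} (hs : s.2 = true) : sc.K s = splitInit sc.β sc.J sc.ν := by
  rw [K_apply, hs, if_pos rfl, splitInit_eq_bind]

lemma bellProb_smul_le (x : 𝓧) : sc.bellProb x • sc.ν ≤ sc.P x := by
  by_cases hx : x ∈ sc.J
  · simpa [bellProb, regenProb, hx] using sc.small x hx
  · simp [bellProb, regenProb, hx, Measure.zero_le]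

lemma residKernel_apply (x : 𝓧) : residKernel sc.P sc.β sc.J sc.ν x
    = (1 - sc.bellProb x)⁻¹ • (sc.P x - sc.bellProb x • sc.ν) := rfl

lemma smul_residKernel (x : 𝓧) :
    (1 - sc.bellProb x) • residKernel sc.P sc.β sc.J sc.ν x = sc.P x - sc.bellProb x • sc.ν := by
  by_cases h : sc.bellProb x = 1
  · have hP : sc.ν = sc.P x :=
      Measure.eq_of_le_of_isProbabilityMeasure (by simpa [h] using sc.bellProb_smul_le x)
    simp [h, ← hP]
  · have h1 : 1 - sc.bellProb x ≠ 0 := (tsub_pos_of_lt ((sc.bellProb_le_one x).lt_of_ne h)).ne'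
    rw [residKernel_apply, smul_smul, ENNReal.mul_inv_cancel h1 (by simp)]
    exact one_smul _ _

lemma K_apply_univ_le (s : 𝓧 × Bool) : sc.K s univ ≤ 1 := by
  rw [K_apply, Measure.bind_apply .univ sc.measurable_bellStep.aemeasurable]
  simp only [measure_univ, lintegral_one]
  split
  · simp
  · have := isFiniteMeasure_of_le _ (sc.bellProb_smul_le s.1)
    rw [residKernel_apply, Measure.smul_apply, Measure.sub_apply .univ (sc.bellProb_smul_le s.1)]
    simp

instance : IsFiniteKernel sc.K := ⟨⟨1, one_lt_top, sc.K_apply_univ_le⟩⟩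

variable {μ : Measure (𝓧 × Bool)} {f G : (ℕ → 𝓧 × Bool) → ℝ≥0∞} {n : ℕ}

/-- For `f` depending on times `≤ n + 1`, this is the conditional expectation of `f` given the
path up to time `n`. -/
def condStep (n : ℕ) (f : (ℕ → 𝓧 × Bool) → ℝ≥0∞) (ω : ℕ → 𝓧 × Bool) : ℝ≥0∞ :=
  ∫⁻ s, f (snoc n ω s) ∂sc.K (ω n)

lemma measurable_condStep (hf : Measurable f) : Measurable (sc.condStep n f) := by
  have : Measurable fun p : (ℕ → 𝓧 × Bool) × (𝓧 × Bool) => f (snoc n p.1 p.2) :=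
    hf.comp (measurable_snoc n)
  exact this.lintegral_kernel_prod_right'
    (κ := sc.K.comap (fun ω : ℕ → 𝓧 × Bool => ω n) (measurable_pi_apply n))

lemma dependsOn_condStep (n : ℕ) (f : (ℕ → 𝓧 × Bool) → ℝ≥0∞) :
    DependsOn (sc.condStep n f) (Iic n) := by
  intro ω ω' h
  have hsnoc : ∀ s, snoc n ω s = snoc n ω' s := fun s => funext fun i => by
    by_cases hi : i ≤ n <;> simp [snoc, hi, h i]
  simp only [condStep, h n (mem_Iic.2 le_rfl), hsnoc]

lemma lintegral_traj_prefix_next [IsProbabilityMeasure μ]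
    {F : (Fin (n + 1) → 𝓧 × Bool) × (𝓧 × Bool) → ℝ≥0∞} (hF : Measurable F) :
    ∫⁻ ω, F (fun i => ω i, ω (n + 1)) ∂sc.traj μ
      = ∫⁻ ω, ∫⁻ s, F (fun i => ω i, s) ∂sc.K (ω n) ∂sc.traj μ := by
  have := sc.probTraj μ inferInstance
  have hpre : Measurable fun ω : ℕ → 𝓧 × Bool => fun i : Fin (n + 1) => ω i := by fun_prop
  rw [← lintegral_map hF (hpre.prodMk (measurable_pi_apply _)), sc.hMarkov,
    Measure.lintegral_compProd hF, lintegral_map _ hpre]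
  · simp
  · exact hF.lintegral_kernel_prod_right'

lemma lintegral_traj_eq_lintegral_condStep [IsProbabilityMeasure μ] (hf : Measurable f)
    (hdep : DependsOn f (Iic (n + 1))) :
    ∫⁻ ω, f ω ∂sc.traj μ = ∫⁻ ω, sc.condStep n f ω ∂sc.traj μ := by
  let F : (Fin (n + 1) → 𝓧 × Bool) × (𝓧 × Bool) → ℝ≥0∞ :=
    fun q => f fun i => if h : i < n + 1 then q.1 ⟨i, h⟩ else q.2
  have hF : Measurable F := hf.comp <| measurable_pi_lambda _ fun i => by
    by_cases h : i < n + 1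
    · simp only [h, dif_pos]; fun_prop
    · simp only [h, dif_neg, not_false_eq_true]; fun_prop
  have hsnoc : ∀ ω s, F (fun i => ω i, s) = f (snoc n ω s) := fun ω s => congrArg f <|
    funext fun i => by simp [snoc]
  have hself : ∀ ω, f ω = F (fun i => ω i, ω (n + 1)) := fun ω => by
    rw [hsnoc]
    exact hdep fun i hi => by
      rcases (mem_Iic.1 hi).lt_or_eq with h | h <;> simp [snoc, Nat.le_of_lt_succ, *]
  simp_rw [hself, sc.lintegral_traj_prefix_next hF, hsnoc, condStep]

lemma lintegral_traj_of_dependsOn_zero (hf : Measurable f) (hdep : DependsOn f (Iic 0)) :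
    ∫⁻ ω, f ω ∂sc.traj μ = ∫⁻ s, f (fun _ => s) ∂μ := by
  have hconst : ∀ ω : ℕ → 𝓧 × Bool, f ω = f fun _ => ω 0 := fun ω =>
    hdep fun i hi => by rw [Nat.le_zero.1 (mem_Iic.1 hi)]
  conv_rhs => rw [← sc.h0 μ]
  rw [lintegral_congr hconst, lintegral_map (f := fun s => f fun _ => s) (hf.comp (by fun_prop))
    (measurable_pi_apply 0)]

lemma lintegral_mul_shift_eq_condStep [IsProbabilityMeasure μ] {j : ℕ} (hG : Measurable G)
    (hGdep : DependsOn G (Iic j)) (hf : Measurable f) (hfdep : DependsOn f (Iic (n + 1))) :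
    ∫⁻ ω, G ω * f (shift j ω) ∂sc.traj μ
      = ∫⁻ ω, G ω * sc.condStep n f (shift j ω) ∂sc.traj μ := by
  rw [sc.lintegral_traj_eq_lintegral_condStep (n := n + j) (f := fun ω => G ω * f (shift j ω))
    (hG.mul (hf.comp (measurable_shift j)))
    ((hGdep.mono (Iic_subset_Iic.2 (by omega))).mul
      ((hfdep.comp_shift j).mono (Iic_subset_Iic.2 (by omega))))]
  refine lintegral_congr fun ω => ?_
  simp only [condStep, hGdep.snoc_eq (by omega : j ≤ n + j), shift_snoc, shift_apply]
  exact lintegral_const_mul _ (hf.comp ((measurable_snoc n).comp measurable_prodMk_left))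

/-- Since `traj (dirac s)` is a probability measure, the Markov property at time `0` forces
`K s` to have mass one. -/
instance : IsMarkovKernel sc.K := ⟨fun s => ⟨by
  have h := sc.lintegral_traj_eq_lintegral_condStep (μ := Measure.dirac s) (n := 0)
    (f := fun _ => 1) measurable_const (fun _ _ _ => rfl)
  have := sc.probTraj (Measure.dirac s) inferInstance
  rw [sc.lintegral_traj_of_dependsOn_zero (sc.measurable_condStep measurable_const)
    (sc.dependsOn_condStep 0 _)] at h
  simpa [condStep, lintegral_dirac' _ (sc.K.measurable_coe .univ)] using h.symm⟩⟩

lemma condStep_zero_comp_shift_one (hdep : DependsOn f (Iic 0)) (ω : ℕ → 𝓧 × Bool) :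
    sc.condStep 0 (fun ω => f (shift 1 ω)) ω = ∫⁻ s, f (fun _ => s) ∂sc.K (ω 0) :=
  lintegral_congr fun s => hdep fun i hi => by simp [snoc, Nat.le_zero.1 (mem_Iic.1 hi)]

lemma lintegral_shift_one_traj [IsProbabilityMeasure μ] (hf : Measurable f)
    (hdep : DependsOn f (Iic n)) :
    ∫⁻ ω, f (shift 1 ω) ∂sc.traj μ = ∫⁻ ω, f ω ∂sc.traj (μ.bind sc.K) := by
  have : IsProbabilityMeasure (μ.bind sc.K) :=
    isProbabilityMeasure_bind sc.K.measurable.aemeasurable (ae_of_all _ inferInstance)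
  induction n generalizing f with
  | zero =>
    have hf0 : Measurable fun s : 𝓧 × Bool => f fun _ => s := hf.comp (by fun_prop)
    rw [sc.lintegral_traj_eq_lintegral_condStep (n := 0) (f := fun ω => f (shift 1 ω))
        (hf.comp (measurable_shift 1)) (hdep.comp_shift 1),
      lintegral_congr (sc.condStep_zero_comp_shift_one hdep),
      sc.lintegral_traj_of_dependsOn_zero (f := fun ω => ∫⁻ s, f (fun _ => s) ∂sc.K (ω 0))
        ((Measure.measurable_lintegral hf0).comp (sc.K.measurable.comp (measurable_pi_apply 0)))
        (fun ω ω' h => by simp only [h 0 (mem_Iic.2 le_rfl)]),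
      sc.lintegral_traj_of_dependsOn_zero hf hdep,
      Measure.lintegral_bind sc.K.measurable.aemeasurable hf0.aemeasurable]
  | succ n ih =>
    have hcond := sc.lintegral_mul_shift_eq_condStep (μ := μ) (G := fun _ => 1) (j := 1)
      measurable_const ((dependsOn_const 1).mono (empty_subset _)) hf hdep
    simp only [one_mul] at hcond
    rw [hcond, ih (sc.measurable_condStep hf) (sc.dependsOn_condStep n f),
      ← sc.lintegral_traj_eq_lintegral_condStep hf hdep]

lemma lintegral_mul_shift_of_bell [IsProbabilityMeasure μ] {k m : ℕ} (hG : Measurable G)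
    (hGdep : DependsOn G (Iic k)) (hGbell : ∀ ω, (ω k).2 = false → G ω = 0)
    (hf : Measurable f) (hfdep : DependsOn f (Iic m)) :
    ∫⁻ ω, G ω * f (shift (k + 1) ω) ∂sc.traj μ
      = (∫⁻ ω, G ω ∂sc.traj μ) * ∫⁻ ω, f ω ∂sc.law sc.ν := by
  induction m generalizing f with
  | zero =>
    have hstep : ∀ ω : ℕ → 𝓧 × Bool, G ω * ∫⁻ s, f (fun _ => s) ∂sc.K (ω k)
        = G ω * ∫⁻ ω, f ω ∂sc.law sc.ν := fun ω => by
      cases hω : (ω k).2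
      · simp [hGbell ω hω]
      · rw [sc.K_of_bell hω, law, sc.lintegral_traj_of_dependsOn_zero hf hfdep]
    have hcond := sc.lintegral_mul_shift_eq_condStep (μ := μ) (j := k) (n := 0)
      (f := fun ω => f (shift 1 ω)) hG hGdep (hf.comp (measurable_shift 1)) (hfdep.comp_shift 1)
    simp only [shift_shift, sc.condStep_zero_comp_shift_one hfdep, shift_apply, zero_add,
      add_comm 1 k] at hcond
    rw [hcond, lintegral_congr hstep, lintegral_mul_const _ hG]
  | succ m ih =>
    rw [sc.lintegral_mul_shift_eq_condStep hG (hGdep.mono (Iic_subset_Iic.2 k.le_succ)) hf hfdep,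
      ih (sc.measurable_condStep hf) (sc.dependsOn_condStep m f), law,
      ← sc.lintegral_traj_eq_lintegral_condStep hf hfdep]

lemma bind_bellStep_K (x : 𝓧) : (sc.bellStep x).bind sc.K = (sc.P x).bind sc.bellStep := by
  ext A hA
  have := isFiniteMeasure_of_le _ (sc.bellProb_smul_le x)
  have hbind : ∀ ξ : Measure 𝓧, ξ.bind sc.bellStep A = ∫⁻ y, sc.bellStep y A ∂ξ := fun ξ =>
    Measure.bind_apply hA sc.measurable_bellStep.aemeasurable
  rw [Measure.bind_apply hA sc.K.measurable.aemeasurable,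
    sc.lintegral_bellStep x (sc.K.measurable_coe hA), sc.K_of_bell rfl, sc.K_apply (x, false),
    if_neg Bool.false_ne_true, splitInit_eq_bind, hbind, hbind, hbind,
    ← Measure.sub_add_cancel_of_le (sc.bellProb_smul_le x), lintegral_add_measure,
    ← smul_residKernel, lintegral_smul_measure, lintegral_smul_measure, smul_eq_mul, smul_eq_mul,
    add_comm]

variable {π : Measure 𝓧}

lemma bind_K_splitInit (hinv : π.bind (fun x => sc.P x) = π) :
    (splitInit sc.β sc.J π).bind sc.K = splitInit sc.β sc.J π := by
  rw [splitInit_eq_bind,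
    Measure.bind_bind sc.measurable_bellStep.aemeasurable sc.K.measurable.aemeasurable]
  simp_rw [bind_bellStep_K]
  rw [← Measure.bind_bind sc.P.measurable.aemeasurable sc.measurable_bellStep.aemeasurable]
  exact congrArg (Measure.bind · sc.bellStep) hinv

lemma lintegral_shift_law [IsProbabilityMeasure π] (hinv : π.bind (fun x => sc.P x) = π)
    (hf : Measurable f) (hdep : DependsOn f (Iic n)) (j : ℕ) :
    ∫⁻ ω, f (shift j ω) ∂sc.law π = ∫⁻ ω, f ω ∂sc.law π := by
  induction j with
  | zero => rfl
  | succ j ih =>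
    simp_rw [← shift_shift j 1]
    rw [law, sc.lintegral_shift_one_traj (f := fun ω => f (shift j ω))
        (hf.comp (measurable_shift j)) (hdep.comp_shift j),
      sc.bind_K_splitInit hinv]
    exact ih

variable [IsProbabilityMeasure π]

lemma lintegral_noBellBefore_mul_shift_law (hinv : π.bind (fun x => sc.P x) = π) {m : ℕ}
    (hf : Measurable f) (hdep : DependsOn f (Iic m)) (n : ℕ) :
    ∫⁻ ω, (noBellBefore n).indicator 1 ω * f (shift n ω) ∂sc.law π
      = ∫⁻ ω, (noBellBefore (n + 1)).indicator 1 ω * f (shift (n + 1) ω) ∂sc.law π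
        + sc.law π (bellAt 0)
          * ∫⁻ ω, (noBellBefore n).indicator 1 ω * f (shift n ω) ∂sc.law sc.ν := by
  set h : (ℕ → 𝓧 × Bool) → ℝ≥0∞ := fun ω => (noBellBefore n).indicator 1 ω * f (shift n ω)
  have hmeas : ∀ k, Measurable ((noBellBefore k).indicator (1 : (ℕ → 𝓧 × Bool) → ℝ≥0∞)) :=
    fun k => measurable_one.indicator (measurableSet_noBellBefore k)
  have hh : Measurable h := (hmeas n).mul (hf.comp (measurable_shift n))
  have hhdep : DependsOn h (Iic (m + n)) :=
    ((dependsOn_indicator_noBellBefore n).mono (Iic_subset_Iic.2 (by omega))).mul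
      (hdep.comp_shift n)
  have hsplit : ∀ ω, h (shift 1 ω) = (noBellBefore (n + 1)).indicator 1 ω * f (shift (n + 1) ω)
      + (bellAt 0).indicator 1 ω * h (shift 1 ω) := fun ω => by
    simp only [h]
    conv_lhs => rw [indicator_noBellBefore_shift_one]
    rw [shift_shift, add_mul, mul_assoc]
  have hbell := sc.lintegral_mul_shift_of_bell (μ := splitInit sc.β sc.J π) (k := 0)
    (measurable_one.indicator (measurableSet_bellAt 0)) (dependsOn_indicator_bellAt 0)
    (fun ω hω => indicator_of_notMem (by simp [bellAt, hω]) _) hh hhdep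
  rw [lintegral_indicator_one (measurableSet_bellAt 0)] at hbell
  rw [← sc.lintegral_shift_law hinv hh hhdep 1, lintegral_congr hsplit,
    lintegral_add_left (f := fun ω => (noBellBefore (n + 1)).indicator 1 ω * f (shift (n + 1) ω))
      ((hmeas (n + 1)).mul (hf.comp (measurable_shift (n + 1))))]
  exact congrArg _ hbell

lemma lintegral_law_eq_add_sum (hinv : π.bind (fun x => sc.P x) = π) {m : ℕ}
    (hf : Measurable f) (hdep : DependsOn f (Iic m)) (n : ℕ) :
    ∫⁻ ω, f ω ∂sc.law π = ∫⁻ ω, (noBellBefore n).indicator 1 ω * f (shift n ω) ∂sc.law π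
      + sc.law π (bellAt 0) * ∑ j ∈ Finset.range n,
          ∫⁻ ω, (noBellBefore j).indicator 1 ω * f (shift j ω) ∂sc.law sc.ν := by
  induction n with
  | zero => simp [noBellBefore_zero]
  | succ n ih =>
    rw [ih, sc.lintegral_noBellBefore_mul_shift_law hinv hf hdep n, Finset.sum_range_succ]
    ring

lemma lintegral_law_eq_tsum_of_le (hinv : π.bind (fun x => sc.P x) = π)
    (hπ : sc.law π {ω | ∀ n, (ω n).2 = false} = 0) {m : ℕ} (hf : Measurable f)
    (hdep : DependsOn f (Iic m)) {C : ℝ≥0∞} (hC : C ≠ ∞) (hfC : ∀ ω, f ω ≤ C) :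
    ∫⁻ ω, f ω ∂sc.law π = sc.law π (bellAt 0) *
      ∑' j, ∫⁻ ω, (noBellBefore j).indicator 1 ω * f (shift j ω) ∂sc.law sc.ν := by
  have hdecomp := sc.lintegral_law_eq_add_sum hinv hf hdep
  refine le_antisymm ?_ ?_
  · have hrem : ∀ n, ∫⁻ ω, (noBellBefore n).indicator 1 ω * f (shift n ω) ∂sc.law π
        ≤ C * sc.law π (noBellBefore n) := fun n => calc
      _ ≤ ∫⁻ ω, (noBellBefore n).indicator 1 ω * C ∂sc.law π :=
          lintegral_mono fun ω => mul_le_mul_right (hfC _) _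
      _ = _ := by
          rw [lintegral_mul_const _ (measurable_one.indicator (measurableSet_noBellBefore n)),
            lintegral_indicator_one (measurableSet_noBellBefore n), mul_comm]
    have hlim := ((ENNReal.Tendsto.const_mul (tendsto_measure_noBellBefore hπ)
      (Or.inr hC)).add_const (sc.law π (bellAt 0) *
        ∑' j, ∫⁻ ω, (noBellBefore j).indicator 1 ω * f (shift j ω) ∂sc.law sc.ν))
    refine ge_of_tendsto' (by simpa using hlim) fun n => ?_
    rw [hdecomp n]
    exact add_le_add (hrem n) (mul_le_mul_right (ENNReal.sum_le_tsum _) _)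
  · rw [ENNReal.tsum_eq_iSup_nat, ENNReal.mul_iSup]
    exact iSup_le fun n => (hdecomp n).symm ▸ le_add_self

def cycleMeasure : Measure (ℕ → 𝓧 × Bool) :=
  Measure.sum fun j => ((sc.law sc.ν).restrict {ω | j < T ω}).map (shift j)

lemma lintegral_cycleMeasure (hf : Measurable f) :
    ∫⁻ ω, f ω ∂sc.cycleMeasure = ∫⁻ ω, ∑ j ∈ Finset.range (T ω), f (shift j ω) ∂sc.law sc.ν := by
  simp_rw [sum_range_T_eq_tsum]
  rw [lintegral_tsum (f := fun j => {ω' | j < T ω'}.indicator (fun ω' => f (shift j ω'))) fun j =>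
      ((hf.comp (measurable_shift j)).indicator (measurableSet_lt_T j)).aemeasurable,
    cycleMeasure, lintegral_sum_measure]
  refine tsum_congr fun j => ?_
  rw [lintegral_map hf (measurable_shift j), lintegral_indicator (measurableSet_lt_T j)]

theorem smul_law_eq_cycleMeasure (hinv : π.bind (fun x => sc.P x) = π)
    (hπ : sc.law π {ω | ∀ n, (ω n).2 = false} = 0)
    (hν : sc.law sc.ν {ω | ∀ n, (ω n).2 = false} = 0) :
    (∫⁻ ω, (T ω : ℝ≥0∞) ∂sc.law sc.ν) • sc.law π = sc.cycleMeasure := by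
  set c := sc.law π (bellAt 0)
  have hcyl : ∀ A ∈ measurableCylinders fun _ : ℕ => 𝓧 × Bool,
      sc.law π A = (c • sc.cycleMeasure) A := by
    intro A hA
    have hAm := MeasurableSet.of_mem_measurableCylinders hA
    obtain ⟨s, S, -, rfl⟩ := (mem_measurableCylinders A).1 hA
    have hdep : DependsOn ((cylinder s S).indicator (1 : (ℕ → 𝓧 × Bool) → ℝ≥0∞))
        (Iic (s.sup id)) :=
      (dependsOn_cylinder_indicator_const (α := fun _ => 𝓧 × Bool) S (1 : ℝ≥0∞)).mono
        fun i hi => Finset.le_sup (f := id) hi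
    have hmeas : Measurable ((cylinder s S).indicator (1 : (ℕ → 𝓧 × Bool) → ℝ≥0∞)) :=
      measurable_one.indicator hAm
    rw [← lintegral_indicator_one hAm, sc.lintegral_law_eq_tsum_of_le hinv hπ hmeas hdep
      one_ne_top (fun ω => indicator_le_self' (fun _ _ => zero_le_one) ω),
      ← lintegral_sum_range_T hν hmeas, ← sc.lintegral_cycleMeasure hmeas,
      lintegral_indicator_one hAm, Measure.smul_apply, smul_eq_mul]
  have hc : sc.law π = c • sc.cycleMeasure :=
    ext_of_generate_finite _ generateFrom_measurableCylinders.symm isPiSystem_measurableCylinders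
      hcyl (hcyl _ (univ_mem_measurableCylinders _))
  have hcT : (∫⁻ ω, (T ω : ℝ≥0∞) ∂sc.law sc.ν) * c = 1 := by
    have h := congrArg (· univ) hc
    simp only [measure_univ, Measure.smul_apply, smul_eq_mul] at h
    rw [← lintegral_one, sc.lintegral_cycleMeasure measurable_const] at h
    simpa [mul_comm] using h.symm
  rw [hc, smul_smul, hcT, one_smul]

end SplitChain

section Square

open SplitChain

lemma sq_sum_range_eq {R : Type*} [CommSemiring R] (a : ℕ → R) (t : ℕ) :
    (∑ i ∈ Finset.range t, a i) ^ 2 = ∑ j ∈ Finset.range t,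
      (a j ^ 2 + 2 * ∑ n ∈ Finset.range (t - j - 1), a j * a (n + 1 + j)) := by
  induction t generalizing a with
  | zero => simp
  | succ t ih =>
    rw [Finset.sum_range_succ', add_sq, ih fun i => a (i + 1), Finset.sum_range_succ' _ t]
    simp only [Nat.add_sub_add_right, Nat.sub_zero, add_zero, ← add_assoc, ← Finset.mul_sum,
      Nat.add_sub_cancel]
    ring

lemma ofReal_sq_sum_range_eq {b : ℕ → ℝ} (hb : ∀ i, 0 ≤ b i) (t : ℕ) :
    ENNReal.ofReal ((∑ i ∈ Finset.range t, b i) ^ 2) = ∑ j ∈ Finset.range t,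
      (ENNReal.ofReal (b j ^ 2)
        + 2 * ∑' n, if n + 1 < t - j then ENNReal.ofReal (b j * b (n + 1 + j)) else 0) := by
  rw [ENNReal.ofReal_pow (Finset.sum_nonneg fun i _ => hb i),
    ENNReal.ofReal_sum_of_nonneg fun i _ => hb i, sq_sum_range_eq]
  refine Finset.sum_congr rfl fun j _ => ?_
  rw [ENNReal.ofReal_pow (hb j), tsum_eq_sum (s := Finset.range (t - j - 1)) fun n hn =>
    if_neg (by simp only [Finset.mem_range] at hn; omega)]
  refine congrArg _ (congrArg _ (Finset.sum_congr rfl fun n hn => ?_))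
  rw [if_pos (by simp only [Finset.mem_range] at hn; omega), ENNReal.ofReal_mul (hb j)]

variable {𝓧 : Type*} {g : 𝓧 → ℝ}

def squareIntegrand (g : 𝓧 → ℝ) (ω : ℕ → 𝓧 × Bool) : ℝ≥0∞ :=
  ENNReal.ofReal (g (ω 0).1 ^ 2)
    + 2 * ∑' n, if n + 1 < T ω then ENNReal.ofReal (g (ω 0).1 * g (ω (n + 1)).1) else 0

lemma sum_range_T_squareIntegrand (hg0 : ∀ x, 0 ≤ g x) (ω : ℕ → 𝓧 × Bool) :
    ∑ j ∈ Finset.range (T ω), squareIntegrand g (shift j ω)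
      = ENNReal.ofReal ((∑ i ∈ Finset.range (T ω), g (ω i).1) ^ 2) := by
  rw [ofReal_sq_sum_range_eq fun i => hg0 _]
  refine Finset.sum_congr rfl fun j hj => ?_
  simp [squareIntegrand, T_shift (Finset.mem_range.1 hj)]

variable [MeasurableSpace 𝓧]

lemma measurable_squareIntegrand_term (hg : Measurable g) (n : ℕ) :
    Measurable fun ω : ℕ → 𝓧 × Bool =>
      if n + 1 < T ω then ENNReal.ofReal (g (ω 0).1 * g (ω (n + 1)).1) else 0 :=
  Measurable.ite (measurableSet_lt_T (n + 1)) (by fun_prop) measurable_const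

lemma measurable_squareIntegrand (hg : Measurable g) : Measurable (squareIntegrand g (𝓧 := 𝓧)) :=
  Measurable.add (by fun_prop) (measurable_const.mul (.tsum (measurable_squareIntegrand_term hg)))

lemma lintegral_squareIntegrand (hg : Measurable g) (μ : Measure (ℕ → 𝓧 × Bool)) :
    ∫⁻ ω, squareIntegrand g ω ∂μ = ∫⁻ ω, ENNReal.ofReal (g (ω 0).1 ^ 2) ∂μ
      + 2 * ∑' n, ∫⁻ ω, (if n + 1 < T ω
        then ENNReal.ofReal (g (ω 0).1 * g (ω (n + 1)).1) else 0) ∂μ := by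
  unfold squareIntegrand
  rw [lintegral_add_left (by fun_prop),
    lintegral_const_mul _ (.tsum (measurable_squareIntegrand_term hg)),
    lintegral_tsum fun n => (measurable_squareIntegrand_term hg n).aemeasurable]

end Square

end

open SplitChain in
theorem block_second_moment {𝓧 : Type*} [MeasurableSpace 𝓧] (sc : SplitChain 𝓧)
    (π : Measure 𝓧) [IsProbabilityMeasure π]
    (hinv : π.bind (fun x => sc.P x) = π)
    (hHarris : ∀ ξ : Measure 𝓧, IsProbabilityMeasure ξ →
      sc.law ξ {ω | ∀ n : ℕ, (ω n).2 = false} = 0)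
    (g : 𝓧 → ℝ) (hg : Measurable g) (hg0 : ∀ x, 0 ≤ g x) :
    ∫⁻ ω, ENNReal.ofReal ((∑ i ∈ Finset.range (T ω), g ((ω i).1)) ^ 2) ∂(sc.law sc.ν)
      = (∫⁻ ω, (T ω : ℝ≥0∞) ∂(sc.law sc.ν)) *
        ((∫⁻ ω, ENNReal.ofReal ((g ((ω 0).1)) ^ 2) ∂(sc.law π))
          + 2 * ∑' n : ℕ,
            ∫⁻ ω, (if n + 1 < T ω
              then ENNReal.ofReal (g ((ω 0).1) * g ((ω (n + 1)).1)) else 0)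
              ∂(sc.law π)) := by
  rw [← lintegral_squareIntegrand hg, ← smul_eq_mul, ← lintegral_smul_measure,
    sc.smul_law_eq_cycleMeasure hinv (hHarris π inferInstance) (hHarris sc.ν inferInstance),
    sc.lintegral_cycleMeasure (measurable_squareIntegrand hg)]
  simp_rw [sum_range_T_squareIntegrand hg0]
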